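/- arXiv:1708.02143 — 2 statements merged into one kernel-verified Lean document; each statement's English description precedes it below -/
import Mathlib

section
/- Over iA⁻, the axiom Box: (φ⊰ψ)→□(φ→ψ) and the axiom Box'': (φ⊰ψ)→((χ→φ)⊰(χ→ψ)) are interderivable. -/
/-- Formulas of the language L⊰: IPC connectives plus a binary Lewis arrow `arr` (⊰). -/
inductive Fm : Type
  | bot  : Fm
  | top  : Fm
  | var  : Nat → Fm
  | and  : Fm → Fm → Fm
  | or   : Fm → Fm → Fm
  | imp  : Fm → Fm → Fm
  | arr  : Fm → Fm → Fm

namespace Fm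
/-- Negation ¬φ := φ → ⊥. -/
def neg (φ : Fm) : Fm := φ.imp bot
/-- The box modality □φ := ⊤ ⊰ φ. -/
def box (φ : Fm) : Fm := top.arr φ
end Fm

/-- Hilbert-style provability in iA₀ extended with an extra set `Ax` of axioms:
intuitionistic propositional logic, Modus Ponens, the rule (⊢ φ→ψ ⟹ ⊢ φ⊰ψ),
and the transitivity axiom Tr : (φ⊰ψ)→(ψ⊰χ)→(φ⊰χ). -/
inductive Prv (Ax : Fm → Prop) : Fm → Prop
  | ax {φ : Fm} : Ax φ → Prv Ax φ
  | mp {φ ψ : Fm} : Prv Ax (φ.imp ψ) → Prv Ax φ → Prv Ax ψ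
  | impK (φ ψ : Fm) : Prv Ax (φ.imp (ψ.imp φ))
  | impS (φ ψ χ : Fm) : Prv Ax ((φ.imp (ψ.imp χ)).imp ((φ.imp ψ).imp (φ.imp χ)))
  | andI (φ ψ : Fm) : Prv Ax (φ.imp (ψ.imp (φ.and ψ)))
  | andE1 (φ ψ : Fm) : Prv Ax ((φ.and ψ).imp φ)
  | andE2 (φ ψ : Fm) : Prv Ax ((φ.and ψ).imp ψ)
  | orI1 (φ ψ : Fm) : Prv Ax (φ.imp (φ.or ψ))
  | orI2 (φ ψ : Fm) : Prv Ax (ψ.imp (φ.or ψ))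
  | orE (φ ψ χ : Fm) : Prv Ax ((φ.imp χ).imp ((ψ.imp χ).imp ((φ.or ψ).imp χ)))
  | botE (φ : Fm) : Prv Ax (Fm.bot.imp φ)
  | topI : Prv Ax Fm.top
  | nec {φ ψ : Fm} : Prv Ax (φ.imp ψ) → Prv Ax (φ.arr ψ)
  | tr (φ ψ χ : Fm) : Prv Ax ((φ.arr ψ).imp ((ψ.arr χ).imp (φ.arr χ)))

/-- The empty set of extra axioms (so `Prv NoAx` is iA₀). -/
def NoAx : Fm → Prop := fun _ => False

/-- K⊰ : (φ⊰ψ)→(φ⊰χ)→(φ⊰(ψ∧χ)). -/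
def KAx : Fm → Prop :=
  fun f => ∃ φ ψ χ : Fm, f = (φ.arr ψ).imp ((φ.arr χ).imp (φ.arr (ψ.and χ)))

/-- K'⊰ : (φ⊰ψ)→((φ∧χ)⊰(ψ∧χ)). -/
def KpAx : Fm → Prop :=
  fun f => ∃ φ ψ χ : Fm, f = (φ.arr ψ).imp ((φ.and χ).arr (ψ.and χ))

/-- K'''⊰ : (φ⊰(ψ→χ))→((φ∧ψ)⊰χ). -/
def KpppAx : Fm → Prop :=
  fun f => ∃ φ ψ χ : Fm, f = (φ.arr (ψ.imp χ)).imp ((φ.and ψ).arr χ)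

/-- Di : (φ⊰χ)→(ψ⊰χ)→((φ∨ψ)⊰χ). -/
def DiAx : Fm → Prop :=
  fun f => ∃ φ ψ χ : Fm, f = (φ.arr χ).imp ((ψ.arr χ).imp ((φ.or ψ).arr χ))

/-- Box : (φ⊰ψ)→□(φ→ψ). -/
def BoxAx : Fm → Prop :=
  fun f => ∃ φ ψ : Fm, f = (φ.arr ψ).imp (Fm.box (φ.imp ψ))

/-- Box' : ((χ∧φ)⊰ψ)→(χ⊰(φ→ψ)). -/
def BoxpAx : Fm → Prop :=
  fun f => ∃ φ ψ χ : Fm, f = ((χ.and φ).arr ψ).imp (χ.arr (φ.imp ψ))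

/-- Box'' : (φ⊰ψ)→((χ→φ)⊰(χ→ψ)). -/
def BoxppAx : Fm → Prop :=
  fun f => ∃ φ ψ χ : Fm, f = (φ.arr ψ).imp ((χ.imp φ).arr (χ.imp ψ))

/-- em : φ∨¬φ. -/
def EmAx : Fm → Prop := fun f => ∃ φ : Fm, f = φ.or φ.neg

/-- S□ : φ→□φ. -/
def SboxAx : Fm → Prop := fun f => ∃ φ : Fm, f = φ.imp (Fm.box φ)

/-- S⊰ : (φ→ψ)→(φ⊰ψ). -/
def SarrAx : Fm → Prop := fun f => ∃ φ ψ : Fm, f = (φ.imp ψ).imp (φ.arr ψ)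

/-- S'⊰ : (φ⊰ψ)→(φ→□ψ). -/
def SparrAx : Fm → Prop := fun f => ∃ φ ψ : Fm, f = (φ.arr ψ).imp (φ.imp (Fm.box ψ))

/-- L⊰ : (□φ→φ)⊰φ. -/
def LarrAx : Fm → Prop := fun f => ∃ φ : Fm, f = ((Fm.box φ).imp φ).arr φ

/-- L□ : □(□φ→φ)→□φ. -/
def LboxAx : Fm → Prop := fun f => ∃ φ : Fm, f = (Fm.box ((Fm.box φ).imp φ)).imp (Fm.box φ)

/-- 4⊰ : φ⊰□φ. -/
def FourAx : Fm → Prop := fun f => ∃ φ : Fm, f = φ.arr (Fm.box φ)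

/-- W⊰ : ((φ∧□ψ)⊰ψ)→(φ⊰ψ). -/
def WAx : Fm → Prop := fun f => ∃ φ ψ : Fm, f = ((φ.and (Fm.box ψ)).arr ψ).imp (φ.arr ψ)

/-- W'⊰ : (φ⊰ψ)→((□ψ→φ)⊰ψ). -/
def WpAx : Fm → Prop := fun f => ∃ φ ψ : Fm, f = (φ.arr ψ).imp (((Fm.box ψ).imp φ).arr ψ)

/-- M⊰ : (φ⊰ψ)→((□χ→φ)⊰(□χ→ψ)). -/
def MAx : Fm → Prop :=
  fun f => ∃ φ ψ χ : Fm, f = (φ.arr ψ).imp (((Fm.box χ).imp φ).arr ((Fm.box χ).imp ψ))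

/-- P⊰ : (φ⊰ψ)→□(φ⊰ψ). -/
def PAx : Fm → Prop := fun f => ∃ φ ψ : Fm, f = (φ.arr ψ).imp (Fm.box (φ.arr ψ))

/-- CB⊰ : (φ⊰ψ)→((φ→ψ)∨φ). -/
def CBAx : Fm → Prop := fun f => ∃ φ ψ : Fm, f = (φ.arr ψ).imp ((φ.imp ψ).or φ)

/-- C4⊰ : □φ⊰φ. -/
def C4Ax : Fm → Prop := fun f => ∃ φ : Fm, f = (Fm.box φ).arr φ

/-- App⊰ : (φ∧(φ⊰ψ))⊰ψ. -/
def AppAx : Fm → Prop := fun f => ∃ φ ψ : Fm, f = (φ.and (φ.arr ψ)).arr ψ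

/-- Hug : (φ→□ψ)→(φ⊰ψ). -/
def HugAx : Fm → Prop := fun f => ∃ φ ψ : Fm, f = (φ.imp (Fm.box ψ)).imp (φ.arr ψ)

/-- Union of two axiom sets. -/
def AxU (A B : Fm → Prop) : Fm → Prop := fun f => A f ∨ B f

namespace Prv

variable {Ax : Fm → Prop}

lemma wk {φ ψ : Fm} (h : Prv Ax ψ) : Prv Ax (φ.imp ψ) := .mp (.impK _ _) h

lemma imp_mp {α ψ χ : Fm} (h1 : Prv Ax (α.imp (ψ.imp χ))) (h2 : Prv Ax (α.imp ψ)) :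
    Prv Ax (α.imp χ) := .mp (.mp (.impS _ _ _) h1) h2

lemma idd (φ : Fm) : Prv Ax (φ.imp φ) :=
  imp_mp (.impK φ (φ.imp φ)) (.impK φ φ)

/-- ((φ→ψ)∧(χ→φ)) → (χ→ψ) -/
lemma conj_comp (φ ψ χ : Fm) :
    Prv Ax (((φ.imp ψ).and (χ.imp φ)).imp (χ.imp ψ)) := by
  set A := φ.imp ψ
  set B := χ.imp φ
  have pA : Prv Ax ((A.and B).imp A) := .andE1 _ _
  have pB : Prv Ax ((A.and B).imp B) := .andE2 _ _
  have h1 : Prv Ax ((A.and B).imp (χ.imp A)) := imp_mp (wk (.impK A χ)) pA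
  have r : Prv Ax ((A.and B).imp ((χ.imp φ).imp (χ.imp ψ))) :=
    imp_mp (wk (.impS χ φ ψ)) h1
  exact imp_mp r pB

end Prv

/-- Over iA⁻, Box and Box'' are interderivable. -/
theorem stmt6 :
    (∀ φ ψ : Fm, Prv (AxU KAx BoxppAx) ((φ.arr ψ).imp (Fm.box (φ.imp ψ)))) ∧
    (∀ φ ψ χ : Fm, Prv (AxU KAx BoxAx) ((φ.arr ψ).imp ((χ.imp φ).arr (χ.imp ψ)))) := by
  constructor
  · intro φ ψ
    -- Box'' with χ := φ gives (φ⊰ψ)→((φ→φ)⊰(φ→ψ))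
    have bpp : Prv (AxU KAx BoxppAx)
        ((φ.arr ψ).imp ((φ.imp φ).arr (φ.imp ψ))) :=
      .ax (Or.inr ⟨φ, ψ, φ, rfl⟩)
    have t : Prv (AxU KAx BoxppAx) (Fm.top.arr (φ.imp φ)) :=
      .nec (Prv.wk (Prv.idd φ))
    have g : Prv (AxU KAx BoxppAx)
        (((φ.imp φ).arr (φ.imp ψ)).imp (Fm.top.arr (φ.imp ψ))) :=
      .mp (.tr _ _ _) t
    exact Prv.imp_mp (Prv.wk g) bpp
  · intro φ ψ χ
    set Ax := AxU KAx BoxAx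
    have b : Prv Ax ((φ.arr ψ).imp (Fm.top.arr (φ.imp ψ))) :=
      .ax (Or.inr ⟨φ, ψ, rfl⟩)
    have n1 : Prv Ax ((χ.imp φ).arr Fm.top) := .nec (Prv.wk .topI)
    have g1 : Prv Ax ((Fm.top.arr (φ.imp ψ)).imp ((χ.imp φ).arr (φ.imp ψ))) :=
      .mp (.tr _ _ _) n1
    have c : Prv Ax ((φ.arr ψ).imp ((χ.imp φ).arr (φ.imp ψ))) :=
      Prv.imp_mp (Prv.wk g1) b
    have d : Prv Ax ((χ.imp φ).arr (χ.imp φ)) := .nec (Prv.idd _)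
    have k : Prv Ax (((χ.imp φ).arr (φ.imp ψ)).imp
        (((χ.imp φ).arr (χ.imp φ)).imp
          ((χ.imp φ).arr ((φ.imp ψ).and (χ.imp φ))))) :=
      .ax (Or.inl ⟨χ.imp φ, φ.imp ψ, χ.imp φ, rfl⟩)
    have e : Prv Ax ((φ.arr ψ).imp
        ((χ.imp φ).arr ((φ.imp ψ).and (χ.imp φ)))) :=
      Prv.imp_mp (Prv.imp_mp (Prv.wk k) c) (Prv.wk d)
    have necf : Prv Ax (((φ.imp ψ).and (χ.imp φ)).arr (χ.imp ψ)) :=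
      .nec (Prv.conj_comp φ ψ χ)
    have trI : Prv Ax (((χ.imp φ).arr ((φ.imp ψ).and (χ.imp φ))).imp
        ((((φ.imp ψ).and (χ.imp φ)).arr (χ.imp ψ)).imp
          ((χ.imp φ).arr (χ.imp ψ)))) := .tr _ _ _
    exact Prv.imp_mp (Prv.imp_mp (Prv.wk trI) e) (Prv.wk necf)
end

section
/- The system iGL⁻ (iA⁻ plus L⊰: (□φ→φ)⊰φ) extended with the Montagna axiom M⊰: (φ⊰ψ)→((□χ→φ)⊰(□χ→ψ)) derives W⊰: ((φ∧□ψ)⊰ψ)→(φ⊰ψ). -/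
-- helper lemmas for Hilbert-style composition
theorem comp {Ax : Fm → Prop} {a b c : Fm}
    (h1 : Prv Ax (a.imp b)) (h2 : Prv Ax (b.imp c)) : Prv Ax (a.imp c) :=
  Prv.mp (Prv.mp (Prv.impS a b c) (Prv.mp (Prv.impK (b.imp c) a) h2)) h1

theorem mp2 {Ax : Fm → Prop} {a b c : Fm}
    (h : Prv Ax (a.imp (b.imp c))) (hb : Prv Ax b) : Prv Ax (a.imp c) :=
  Prv.mp (Prv.mp (Prv.impS a b c) h) (Prv.mp (Prv.impK b a) hb)

/-- iGL⁻ + M⊰ derives W⊰ : ((φ∧□ψ)⊰ψ)→(φ⊰ψ). -/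
theorem stmt12 :
    ∀ φ ψ : Fm,
      Prv (AxU KAx (AxU LarrAx MAx)) (((φ.and (Fm.box ψ)).arr ψ).imp (φ.arr ψ)) := by
  intro φ ψ
  set Ax := AxU KAx (AxU LarrAx MAx)
  set X : Fm := (Fm.box ψ).imp ψ
  set Y : Fm := (Fm.box ψ).imp (φ.and (Fm.box ψ))
  -- M instance: ((φ∧□ψ)⊰ψ) → (Y ⊰ X)
  have m : Prv Ax ((((φ.and (Fm.box ψ)).arr ψ)).imp (Y.arr X)) :=
    Prv.ax (Or.inr (Or.inr ⟨φ.and (Fm.box ψ), ψ, ψ, rfl⟩))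
  -- nec of andI : φ ⊰ Y
  have n : Prv Ax (φ.arr Y) := Prv.nec (Prv.andI φ (Fm.box ψ))
  -- L instance : X ⊰ ψ
  have l : Prv Ax (X.arr ψ) := Prv.ax (Or.inr (Or.inl ⟨ψ, rfl⟩))
  -- t1 : (Y⊰X) → (φ⊰X)
  have t1 : Prv Ax ((Y.arr X).imp (φ.arr X)) := Prv.mp (Prv.tr φ Y X) n
  -- t2 : (φ⊰X) → (φ⊰ψ)
  have t2 : Prv Ax ((φ.arr X).imp (φ.arr ψ)) := mp2 (Prv.tr φ X ψ) l
  exact comp m (comp t1 t2)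
end
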